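/- arXiv:1404.1631 — 2 statements merged into one kernel-verified Lean document; each statement's English description precedes it below -/
import Mathlib

section
/- Let (γ_n)_{n≥0} be a sequence of real numbers, let T : ℝ[x] → ℝ[x] be the linear operator determined by T[H_n] = γ_n H_n for every n, and let (Q_k)_{k≥0} be the differential coefficients of T. Then for each n ∈ ℕ₀, the following identity holds in ℂ[x] (where ι : ℝ[x] → ℂ[x] is the coefficientwise inclusion): ι(Q_n)(x) = (1/(n! 2^n)) Σ_{k=0}^{n} C(n,k) γ_k · i^{n−k} · ι(H_{n−k})(i x) · ι(H_k)(x), where ι(H_{n−k})(i x) denotes the composition of the complex polynomial ι(H_{n−k}) with the polynomial i·x. -/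
open Polynomial Finset

noncomputable section

/-- The physicists' Hermite polynomials. -/
def hermitePoly (n : ℕ) : Polynomial ℝ :=
  ∑ k ∈ Finset.range (n / 2 + 1),
    Polynomial.C ((-1 : ℝ) ^ k * n.factorial * 2 ^ (n - 2 * k) /
      (k.factorial * (n - 2 * k).factorial)) * Polynomial.X ^ (n - 2 * k)

/-- The Laguerre polynomials. -/
def laguerrePoly (n : ℕ) : Polynomial ℝ :=
  ∑ k ∈ Finset.range (n + 1),
    Polynomial.C ((-1 : ℝ) ^ k / k.factorial * n.choose k) * Polynomial.X ^ k

/-- A real polynomial is hyperbolic if all of its complex roots are real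
(the zero polynomial counts as hyperbolic). -/
def Hyperbolic (p : Polynomial ℝ) : Prop :=
  p = 0 ∨ ∀ z : ℂ, Polynomial.aeval z p = 0 → z.im = 0

/-- A linear operator on ℝ[x] preserves hyperbolicity. -/
def HypPreserving (T : Polynomial ℝ →ₗ[ℝ] Polynomial ℝ) : Prop :=
  ∀ p : Polynomial ℝ, Hyperbolic p → Hyperbolic (T p)

/-- Classical multiplier sequence. -/
def ClassicalMS (γ : ℕ → ℝ) : Prop :=
  ∃ T : Polynomial ℝ →ₗ[ℝ] Polynomial ℝ,
    (∀ n, T (Polynomial.X ^ n) = γ n • Polynomial.X ^ n) ∧ HypPreserving T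

/-- Hermite multiplier sequence. -/
def HermiteMS (γ : ℕ → ℝ) : Prop :=
  ∃ T : Polynomial ℝ →ₗ[ℝ] Polynomial ℝ,
    (∀ n, T (hermitePoly n) = γ n • hermitePoly n) ∧ HypPreserving T

/-- Laguerre multiplier sequence. -/
def LaguerreMS (γ : ℕ → ℝ) : Prop :=
  ∃ T : Polynomial ℝ →ₗ[ℝ] Polynomial ℝ,
    (∀ n, T (laguerrePoly n) = γ n • laguerrePoly n) ∧ HypPreserving T

/-- A sequence is trivial if all entries vanish except possibly two at consecutive indices. -/
def TrivialSeq (γ : ℕ → ℝ) : Prop :=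
  ∃ m : ℕ, ∀ n, n ≠ m → n ≠ m + 1 → γ n = 0

/-! With `A_n(x) = i^n H_n(i x)`, consider in `ℂ[x]⟦t⟧` the exponential generating functions
`E = Σ H_n t^n / n!` and `F = Σ A_n t^n / n!`. The three-term recurrence
`H_{n+1} = 2x H_n - 2n H_{n-1}` says `E' = (2x - 2t) E`, and the substitution `x ↦ i x` turns it
into `F' = (-2x + 2t) F`; hence `(E F)' = 0` and `E F = 1`. Since
`H_m^{(k)} = 2^k k! C(m,k) H_{m-k}`, the relations `T[H_m] = γ_m H_m` say that
`(Σ 2^k k! Q_k t^k / k!) · E = Σ γ_m H_m t^m / m!`; multiplying by `F` and comparing coefficients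
of `t^n` gives the formula. -/

open Nat

def egf {R : Type*} [CommRing R] [Algebra ℚ R] (p : ℕ → R) : PowerSeries R :=
  PowerSeries.mk fun n => algebraMap ℚ R (n ! : ℚ)⁻¹ * p n

section Egf

open scoped PowerSeries

variable {R : Type*} [CommRing R] [Algebra ℚ R]

theorem coeff_egf (p : ℕ → R) (n : ℕ) :
    PowerSeries.coeff n (egf p) = algebraMap ℚ R (n ! : ℚ)⁻¹ * p n :=
  PowerSeries.coeff_mk _ _

theorem factorial_mul_coeff_egf (p : ℕ → R) (n : ℕ) :
    (n ! : R) * PowerSeries.coeff n (egf p) = p n := by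
  rw [coeff_egf, ← mul_assoc, ← map_natCast (algebraMap ℚ R), ← map_mul,
    mul_inv_cancel₀ (by positivity), map_one, one_mul]

theorem egf_injective : Function.Injective (egf (R := R)) := fun p q h => funext fun n => by
  rw [← factorial_mul_coeff_egf p, h, factorial_mul_coeff_egf]

theorem egf_mul_egf (p q : ℕ → R) :
    egf p * egf q = egf fun n => ∑ k ∈ range (n + 1), (n.choose k : R) * p k * q (n - k) := by
  ext n
  rw [PowerSeries.coeff_mul, Nat.sum_antidiagonal_eq_sum_range_succ
    (fun i j => PowerSeries.coeff i (egf p) * PowerSeries.coeff j (egf q)), coeff_egf, mul_sum]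
  refine sum_congr rfl fun k hk => ?_
  obtain ⟨j, rfl⟩ : ∃ j, n = k + j := ⟨n - k, by grind⟩
  have hchoose : (((k + j).choose k : ℕ) : ℚ) = (k + j)! / (k ! * j !) := Nat.cast_add_choose ℚ
  rw [coeff_egf, coeff_egf, Nat.add_sub_cancel_left, ← map_natCast (algebraMap ℚ R), hchoose]
  simp only [← mul_assoc, ← map_mul]
  rw [mul_right_comm _ (p k), ← map_mul]
  congr 2
  field_simp

theorem algebraMap_inv_factorial_succ_mul (n : ℕ) :
    algebraMap ℚ R ((n + 1)! : ℚ)⁻¹ * (n + 1 : R) = algebraMap ℚ R (n ! : ℚ)⁻¹ := by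
  rw [← Nat.cast_succ, ← map_natCast (algebraMap ℚ R), ← map_mul, Nat.factorial_succ]
  congr 1
  field_simp
  push_cast
  ring

theorem derivative_egf (p : ℕ → R) : d⁄dX R (egf p) = egf fun n => p (n + 1) := by
  ext n
  rw [PowerSeries.coeff_derivative, coeff_egf, coeff_egf, mul_right_comm,
    algebraMap_inv_factorial_succ_mul]

-- At `n = 0` the truncated `n - 1` is harmless, its coefficient being `s * 0`.
theorem derivative_egf_of_recurrence (p : ℕ → R) (c s : R)
    (h : ∀ n, p (n + 1) = c * p n + s * n * p (n - 1)) :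
    d⁄dX R (egf p) = (PowerSeries.C c + PowerSeries.C s * PowerSeries.X) * egf p := by
  rw [derivative_egf]
  ext n
  rw [coeff_egf, h, add_mul, map_add, PowerSeries.coeff_C_mul, mul_assoc (PowerSeries.C s),
    PowerSeries.coeff_C_mul, coeff_egf]
  cases n with
  | zero => simp
  | succ m =>
    rw [PowerSeries.coeff_succ_X_mul, coeff_egf, Nat.add_sub_cancel, Nat.cast_succ,
      ← algebraMap_inv_factorial_succ_mul m]
    ring

theorem egf_mul_egf_eq_one (p q : ℕ → R) (c s : R)
    (hp : ∀ n, p (n + 1) = c * p n + s * n * p (n - 1))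
    (hq : ∀ n, q (n + 1) = -c * q n + -s * n * q (n - 1)) (h0 : p 0 * q 0 = 1) :
    egf p * egf q = 1 := by
  have : IsAddTorsionFree R := .of_module_rat R
  apply PowerSeries.derivative.ext
  · rw [Derivation.leibniz, derivative_egf_of_recurrence p c s hp,
      derivative_egf_of_recurrence q _ _ hq, PowerSeries.derivative_one, smul_eq_mul, smul_eq_mul,
      map_neg, map_neg]
    ring
  · rw [map_mul, map_one, ← PowerSeries.coeff_zero_eq_constantCoeff_apply,
      ← PowerSeries.coeff_zero_eq_constantCoeff_apply, coeff_egf, coeff_egf]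
    simpa using h0

end Egf

theorem coeff_hermitePoly (n m : ℕ) : (hermitePoly n).coeff m =
    ∑ k ∈ range (n / 2 + 1), if m = n - 2 * k then
      (-1 : ℝ) ^ k * n ! * 2 ^ (n - 2 * k) / (k ! * (n - 2 * k)!) else 0 := by
  simp only [hermitePoly, finsetSum_coeff, coeff_C_mul, coeff_X_pow, mul_ite, mul_one, mul_zero]

theorem coeff_hermitePoly_add_two_mul (m j : ℕ) :
    (hermitePoly (m + 2 * j)).coeff m = (-1 : ℝ) ^ j * (m + 2 * j)! * 2 ^ m / (j ! * m !) := by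
  rw [coeff_hermitePoly, sum_eq_single_of_mem j (mem_range.2 (by omega))]
  · simp
  · intro k hk hkj
    rw [mem_range] at hk
    rw [if_neg (by omega)]

theorem coeff_hermitePoly_eq_zero {n m : ℕ} (h : ∀ j, n ≠ m + 2 * j) :
    (hermitePoly n).coeff m = 0 := by
  rw [coeff_hermitePoly]
  exact sum_eq_zero fun k hk => if_neg fun hm => h k (by rw [mem_range] at hk; omega)

theorem hermitePoly_zero : hermitePoly 0 = 1 := by
  simp [hermitePoly]

theorem natDegree_hermitePoly (n : ℕ) : (hermitePoly n).natDegree = n := by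
  refine natDegree_eq_of_le_of_coeff_ne_zero ?_ ?_
  · exact natDegree_le_iff_coeff_eq_zero.2 fun m hm =>
      coeff_hermitePoly_eq_zero fun j => by omega
  · have h := coeff_hermitePoly_add_two_mul n 0
    rw [mul_zero, add_zero] at h
    rw [h]
    simp [Nat.factorial_ne_zero]

theorem derivative_hermitePoly_succ (n : ℕ) :
    derivative (hermitePoly (n + 1)) = C (2 * (n + 1) : ℝ) * hermitePoly n := by
  ext m
  rw [coeff_derivative, coeff_C_mul]
  by_cases h : ∃ j, n = m + 2 * j
  · obtain ⟨j, rfl⟩ := h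
    rw [show m + 2 * j + 1 = m + 1 + 2 * j by ring, coeff_hermitePoly_add_two_mul,
      coeff_hermitePoly_add_two_mul, show m + 1 + 2 * j = m + 2 * j + 1 by ring]
    push_cast [Nat.factorial_succ]
    field_simp
    ring
  · push Not at h
    rw [coeff_hermitePoly_eq_zero fun j => by have := h j; omega, coeff_hermitePoly_eq_zero h]
    simp

theorem iterate_derivative_hermitePoly {n k : ℕ} (hk : k ≤ n) :
    derivative^[k] (hermitePoly n) = C (2 ^ k * k ! * n.choose k : ℝ) * hermitePoly (n - k) := by
  induction k with
  | zero => simp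
  | succ k ih =>
    obtain ⟨j, hj⟩ : ∃ j, n - k = j + 1 := ⟨n - k - 1, by omega⟩
    rw [Function.iterate_succ_apply', ih (by omega), derivative_C_mul, hj,
      derivative_hermitePoly_succ, ← mul_assoc, ← C_mul, show n - (k + 1) = j by omega]
    congr 2
    have hchoose := Nat.choose_succ_right_eq n k
    rw [show n - k = j + 1 by omega] at hchoose
    rw [pow_succ, Nat.factorial_succ]
    have : (n.choose (k + 1) : ℝ) * (k + 1) = n.choose k * (j + 1) := by exact_mod_cast hchoose
    push_cast
    linear_combination -(2 ^ k * 2 * k ! : ℝ) * this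

theorem coeff_zero_hermitePoly_add_two (n : ℕ) :
    (hermitePoly (n + 2)).coeff 0 = -(2 * (n + 1)) * (hermitePoly n).coeff 0 := by
  by_cases h : ∃ j, n = 0 + 2 * j
  · obtain ⟨j, rfl⟩ := h
    rw [show 0 + 2 * j + 2 = 0 + 2 * (j + 1) by ring, coeff_hermitePoly_add_two_mul,
      coeff_hermitePoly_add_two_mul, zero_add, zero_add, show 2 * (j + 1) = 2 * j + 1 + 1 by ring]
    push_cast [Nat.factorial_succ]
    field_simp
    ring
  · push Not at h
    rw [coeff_hermitePoly_eq_zero fun j => by have := h (j - 1); omega,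
      coeff_hermitePoly_eq_zero h, mul_zero]

theorem coeff_succ_hermitePoly_add_two (n m : ℕ) :
    (hermitePoly (n + 2)).coeff (m + 1) =
      2 * (hermitePoly (n + 1)).coeff m - 2 * (n + 1) * (hermitePoly n).coeff (m + 1) := by
  by_cases h : ∃ j, n + 1 = m + 2 * j
  · obtain ⟨j, hj⟩ := h
    rcases j with _ | j
    · obtain rfl : m = n + 1 := by omega
      rw [coeff_hermitePoly_eq_zero (n := n) (m := n + 1 + 1) fun j => by omega]
      have h₁ := coeff_hermitePoly_add_two_mul (n + 1) 0
      have h₂ := coeff_hermitePoly_add_two_mul (n + 2) 0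
      simp only [mul_zero, add_zero] at h₁ h₂
      rw [h₁, h₂]
      push_cast [Nat.factorial_succ]
      field_simp
      ring
    · obtain rfl : n = m + 1 + 2 * j := by omega
      rw [show m + 1 + 2 * j + 2 = m + 1 + 2 * (j + 1) by ring,
        show m + 1 + 2 * j + 1 = m + 2 * (j + 1) by ring, coeff_hermitePoly_add_two_mul,
        coeff_hermitePoly_add_two_mul, coeff_hermitePoly_add_two_mul,
        show m + 1 + 2 * (j + 1) = m + 1 + 2 * j + 1 + 1 by ring,
        show m + 2 * (j + 1) = m + 1 + 2 * j + 1 by ring]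
      push_cast [Nat.factorial_succ]
      field_simp
      ring
  · push Not at h
    rw [coeff_hermitePoly_eq_zero fun j => by have := h j; omega, coeff_hermitePoly_eq_zero h,
      coeff_hermitePoly_eq_zero fun j => by have := h (j + 1); omega]
    ring

theorem hermitePoly_succ (n : ℕ) :
    hermitePoly (n + 1) = C 2 * X * hermitePoly n - C (2 * n : ℝ) * hermitePoly (n - 1) := by
  rcases n with _ | n
  · simp [hermitePoly]
  ext m
  rw [coeff_sub, mul_assoc, coeff_C_mul, coeff_C_mul, Nat.add_sub_cancel]
  rcases m with _ | m
  · rw [coeff_X_mul_zero, coeff_zero_hermitePoly_add_two]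
    push_cast
    ring
  · rw [coeff_X_mul, coeff_succ_hermitePoly_add_two]
    push_cast
    ring

def complexHermite (n : ℕ) : ℂ[X] := (hermitePoly n).map (algebraMap ℝ ℂ)

open Complex in
def dualHermite (n : ℕ) : ℂ[X] := C (I ^ n) * (complexHermite n).comp (C I * X)

theorem complexHermite_zero : complexHermite 0 = 1 := by
  rw [complexHermite, hermitePoly_zero, Polynomial.map_one]

theorem dualHermite_zero : dualHermite 0 = 1 := by
  simp [dualHermite, complexHermite_zero]

theorem complexHermite_succ (n : ℕ) :
    complexHermite (n + 1) =
      2 * X * complexHermite n - 2 * (n : ℂ[X]) * complexHermite (n - 1) := by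
  simp [complexHermite, hermitePoly_succ, C_ofNat]

theorem dualHermite_succ (n : ℕ) :
    dualHermite (n + 1) = -2 * X * dualHermite n + 2 * (n : ℂ[X]) * dualHermite (n - 1) := by
  have hI : (C Complex.I : ℂ[X]) ^ 2 = -1 := by rw [← C_pow, Complex.I_sq, C_neg, C_1]
  simp only [dualHermite]
  rw [complexHermite_succ]
  simp only [sub_comp, mul_comp, X_comp, ofNat_comp, natCast_comp, C_pow]
  rcases n with _ | m
  · simp only [CharP.cast_eq_zero, mul_zero, zero_mul, sub_zero, pow_zero, one_mul]
    linear_combination (2 * X * (complexHermite 0).comp (C Complex.I * X)) * hI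
  · push_cast
    linear_combination (2 * X * (complexHermite (m + 1)).comp (C Complex.I * X) *
        C Complex.I ^ (m + 1) - 2 * (m + 1 : ℂ[X]) * (complexHermite m).comp (C Complex.I * X) *
        C Complex.I ^ m) * hI

theorem egf_complexHermite_mul_egf_dualHermite : egf complexHermite * egf dualHermite = 1 := by
  refine egf_mul_egf_eq_one _ _ (2 * X) (-2) (fun n => by rw [complexHermite_succ]; ring)
    (fun n => by rw [dualHermite_succ]; ring) ?_
  rw [complexHermite_zero, dualHermite_zero, one_mul]

theorem sum_mul_iterate_derivative_hermitePoly (Q : ℕ → ℝ[X]) (n : ℕ) :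
    ∑ k ∈ range ((hermitePoly n).natDegree + 1), Q k * derivative^[k] (hermitePoly n) =
      ∑ k ∈ range (n + 1), (n.choose k : ℝ[X]) * (C (2 ^ k * k ! : ℝ) * Q k) *
        hermitePoly (n - k) := by
  rw [natDegree_hermitePoly]
  refine sum_congr rfl fun k hk => ?_
  rw [iterate_derivative_hermitePoly (by rw [mem_range] at hk; omega), ← C_eq_natCast, C_mul,
    C_mul]
  ring

theorem egf_differentialCoeff_mul_egf_complexHermite (γ : ℕ → ℝ) (T : ℝ[X] →ₗ[ℝ] ℝ[X])
    (hT : ∀ n, T (hermitePoly n) = γ n • hermitePoly n) (Q : ℕ → ℝ[X])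
    (hQ : ∀ p, T p = ∑ k ∈ range (p.natDegree + 1), Q k * derivative^[k] p) :
    egf (fun k => C (2 ^ k * k ! : ℂ) * (Q k).map (algebraMap ℝ ℂ)) * egf complexHermite =
      egf fun n => C (γ n : ℂ) * complexHermite n := by
  rw [egf_mul_egf]
  congr 1
  funext n
  have h := hQ (hermitePoly n)
  rw [hT, smul_eq_C_mul, sum_mul_iterate_derivative_hermitePoly] at h
  have := congrArg (Polynomial.map (algebraMap ℝ ℂ)) h
  simpa [Polynomial.map_sum, complexHermite] using this.symm

/-- the complex formula for the differential coefficients of a Hermite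
diagonal differential operator. -/
theorem stmt_9 (γ : ℕ → ℝ)
    (T : Polynomial ℝ →ₗ[ℝ] Polynomial ℝ)
    (hT : ∀ n, T (hermitePoly n) = γ n • hermitePoly n)
    (Q : ℕ → Polynomial ℝ)
    (hQ : ∀ p : Polynomial ℝ,
      T p = ∑ k ∈ Finset.range (p.natDegree + 1), Q k * (Polynomial.derivative^[k] p)) :
    ∀ n : ℕ, (Q n).map (algebraMap ℝ ℂ) =
      Polynomial.C ((1 : ℂ) / (n.factorial * 2 ^ n)) *
        ∑ k ∈ Finset.range (n + 1),
          Polynomial.C ((n.choose k : ℂ) * (γ k : ℂ) * Complex.I ^ (n - k)) *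
            (((hermitePoly (n - k)).map (algebraMap ℝ ℂ)).comp
              (Polynomial.C Complex.I * Polynomial.X)) *
            ((hermitePoly k).map (algebraMap ℝ ℂ)) := by
  intro n
  have hegf : egf (fun k => C (2 ^ k * k ! : ℂ) * (Q k).map (algebraMap ℝ ℂ)) =
      egf (fun n => C (γ n : ℂ) * complexHermite n) * egf dualHermite := by
    rw [← egf_differentialCoeff_mul_egf_complexHermite γ T hT Q hQ, mul_assoc,
      egf_complexHermite_mul_egf_dualHermite, mul_one]
  rw [egf_mul_egf] at hegf
  have hn := congrFun (egf_injective hegf) n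
  have hunit : C ((1 : ℂ) / (n ! * 2 ^ n)) * C (2 ^ n * n ! : ℂ) = 1 := by
    have : (n ! : ℂ) ≠ 0 := Nat.cast_ne_zero.2 n.factorial_ne_zero
    rw [← C_mul, ← C_1]
    field_simp
  rw [← one_mul ((Q n).map _), ← hunit, mul_assoc, hn]
  refine congrArg (C _ * ·) (sum_congr rfl fun k _ => ?_)
  simp only [dualHermite, complexHermite, ← C_eq_natCast, C_mul]
  ring
end
end

section
/- Let (γ_k)_{k≥0} be a sequence of real numbers. Let T be the linear operator on ℝ[x] determined by T[H_n] = γ_n H_n with differential coefficients (Q_k)_{k≥0}, and let T̃ be the linear operator determined by T̃[H_n] = (−1)^n γ_n H_n with differential coefficients (Q̃_k)_{k≥0}. Then for each n ∈ ℕ₀: Q_n(x) = (−2)^n Σ_{k=0}^{n} Q̃_k(x) · x^{n−k}/(2^{k} (n−k)!) and Q̃_n(x) = (−2)^n Σ_{k=0}^{n} Q_k(x) · x^{n−k}/(2^{k} (n−k)!). -/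
open Polynomial Finset

noncomputable section

/-! Since `H_n(-x) = (-1)^n H_n(x)` and the Hermite polynomials span `ℝ[x]`, the two operators are
related by `T p = T̃ (p(-x))` and `T̃ p = T (p(-x))`. Writing `p(-x) = p(x + (-2x))` as a Taylor
expansion and using `D^k (p(-x)) = (-1)^k (D^k p)(-x)` turns `p ↦ T̃ (p(-x))` into a differential
operator whose coefficients are the claimed sums; differential coefficients are unique, as one sees
by testing on the monomials `x^n`. -/

theorem neg_one_pow_mul_neg_two_pow_div {K : Type*} [Field K] [CharZero K] (k j : ℕ) :
    (-1 : K) ^ k * ((-2) ^ j / j.factorial) = (-2) ^ (k + j) * (1 / (2 ^ k * j.factorial)) := by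
  have : (j.factorial : K) ≠ 0 := by exact_mod_cast j.factorial_ne_zero
  rw [pow_add, show (-2 : K) = -1 * 2 by norm_num, mul_pow, mul_pow]
  field_simp

namespace Polynomial

open scoped Nat

theorem hasseDeriv_map {R S : Type*} [Semiring R] [Semiring S] (f : R →+* S) (k : ℕ)
    (p : R[X]) : hasseDeriv k (p.map f) = (hasseDeriv k p).map f := by
  ext n
  simp [hasseDeriv_coeff, coeff_map]

theorem comp_X_add_eq_sum_hasseDeriv {R : Type*} [CommSemiring R] (q h : R[X]) {M : ℕ}
    (hM : q.natDegree < M) : q.comp (X + h) = ∑ j ∈ range M, h ^ j * hasseDeriv j q := by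
  -- Taylor-expand `q`, viewed over the ring `R[X]`, around the point `X`.
  have hM' : (taylor X (q.map C)).natDegree < M := by
    rw [natDegree_taylor]
    exact natDegree_map_le.trans_lt hM
  calc q.comp (X + h) = (q.map C).eval (h + X) := by rw [eval_map, add_comm]; rfl
    _ = ∑ j ∈ range M, (hasseDeriv j q).comp X * h ^ j := by
      rw [← taylor_eval, eval_eq_sum_range' hM']
      simp only [taylor_coeff, hasseDeriv_map, eval_map]
      rfl
    _ = _ := by simp only [comp_X, mul_comm]

theorem iterate_derivative_comp_neg_X {R : Type*} [CommRing R] (p : R[X]) (k : ℕ) :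
    derivative^[k] (p.comp (-X)) = (-1) ^ k * (derivative^[k] p).comp (-X) := by
  induction k generalizing p with
  | zero => simp
  | succ k ih => simp [ih (derivative p), derivative_comp, pow_succ]

def diffOp {R : Type*} [Semiring R] (Q : ℕ → R[X]) (p : R[X]) : R[X] :=
  ∑ k ∈ range (p.natDegree + 1), Q k * derivative^[k] p

theorem diffOp_injective {R : Type*} [CommRing R] [IsDomain R] [CharZero R] :
    Function.Injective (diffOp : (ℕ → R[X]) → R[X] → R[X]) := by
  intro A B h
  funext n
  induction n using Nat.strong_induction_on with
  | _ n ih =>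
    have hn := congrFun h (X ^ n)
    simp only [diffOp, natDegree_X_pow, sum_range_succ] at hn
    rw [sum_congr rfl fun k hk => by rw [ih k (mem_range.mp hk)], add_right_inj,
      iterate_derivative_X_pow_eq_C_mul, Nat.sub_self, pow_zero, mul_one] at hn
    exact mul_right_cancel₀ (by simp [Nat.descFactorial_self, Nat.factorial_ne_zero]) hn

section Field

variable {K : Type*} [Field K] [CharZero K]

theorem hasseDeriv_eq_C_inv_factorial_mul (j : ℕ) (q : K[X]) :
    hasseDeriv j q = C ((j ! : K)⁻¹) * derivative^[j] q := by
  have hj : (j ! : K) ≠ 0 := by exact_mod_cast j.factorial_ne_zero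
  rw [← factorial_smul_hasseDeriv, LinearMap.smul_apply, nsmul_eq_mul, ← mul_assoc,
    ← C_eq_natCast, ← C_mul, inv_mul_cancel₀ hj, C_1, one_mul]

theorem comp_neg_X_eq_sum (q : K[X]) {M : ℕ} (hM : q.natDegree < M) :
    q.comp (-X) = ∑ j ∈ range M, C ((-2 : K) ^ j / j !) * X ^ j * derivative^[j] q := by
  rw [show (-X : K[X]) = X + C (-2) * X by rw [map_neg, map_ofNat]; ring,
    comp_X_add_eq_sum_hasseDeriv q _ hM]
  refine sum_congr rfl fun j _ => ?_
  rw [hasseDeriv_eq_C_inv_factorial_mul, mul_pow, ← C_pow, div_eq_mul_inv, C_mul]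
  ring

/-- The differential coefficients of `p ↦ diffOp Q (p.comp (-X))`. -/
def compNegXCoeff (Q : ℕ → K[X]) (n : ℕ) : K[X] :=
  C ((-2 : K) ^ n) * ∑ k ∈ range (n + 1), C ((1 : K) / (2 ^ k * (n - k)!)) * Q k * X ^ (n - k)

theorem diffOp_comp_neg_X (Q : ℕ → K[X]) (p : K[X]) :
    diffOp Q (p.comp (-X)) = diffOp (compNegXCoeff Q) p := by
  set N := p.natDegree
  let f : ℕ → ℕ → K[X] := fun k j =>
    C ((-1 : K) ^ k * ((-2) ^ j / j !)) * Q k * X ^ j * derivative^[k + j] p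
  have hterm : ∀ k ∈ range (N + 1),
      Q k * derivative^[k] (p.comp (-X)) = ∑ j ∈ range (N + 1 - k), f k j := by
    intro k hk
    have hdeg : (derivative^[k] p).natDegree < N + 1 - k :=
      (natDegree_iterate_derivative p k).trans_lt (by rw [mem_range] at hk; omega)
    rw [iterate_derivative_comp_neg_X, comp_neg_X_eq_sum _ hdeg, mul_sum, mul_sum]
    refine sum_congr rfl fun j _ => ?_
    simp only [f]
    rw [add_comm k j, Function.iterate_add_apply, C_mul, C_pow, C_neg, C_1]
    ring
  have hcoeff : ∀ m ∈ range (N + 1),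
      ∑ k ∈ range (m + 1), f k (m - k) = compNegXCoeff Q m * derivative^[m] p := by
    intro m _
    rw [compNegXCoeff, mul_assoc, sum_mul, mul_sum]
    refine sum_congr rfl fun k hk => ?_
    obtain ⟨j, rfl⟩ := Nat.exists_eq_add_of_le (Nat.lt_succ_iff.mp (mem_range.mp hk))
    simp only [f, Nat.add_sub_cancel_left, neg_one_pow_mul_neg_two_pow_div, C_mul]
    ring
  simp only [diffOp, natDegree_comp, natDegree_neg, natDegree_X, mul_one]
  rw [sum_congr rfl hterm, ← sum_range_diag_flip, sum_congr rfl hcoeff]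

theorem eq_compNegXCoeff_of_diffOp_eq {Q Q' : ℕ → K[X]}
    (h : ∀ p, diffOp Q p = diffOp Q' (p.comp (-X))) : Q = compNegXCoeff Q' :=
  diffOp_injective <| _root_.funext fun p => (h p).trans (diffOp_comp_neg_X Q' p)

end Field

end Polynomial

theorem natDegree_hermitePoly_le (n : ℕ) : (hermitePoly n).natDegree ≤ n :=
  natDegree_sum_le_of_forall_le _ _ fun _ _ =>
    (natDegree_C_mul_X_pow_le _ _).trans (Nat.sub_le _ _)

theorem coeff_hermitePoly_self (n : ℕ) : (hermitePoly n).coeff n = 2 ^ n := by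
  rw [hermitePoly, finsetSum_coeff, sum_eq_single 0]
  · simp only [mul_zero, Nat.sub_zero, coeff_C_mul_X_pow, if_pos, Nat.factorial_zero, Nat.cast_one]
    field_simp
  · intro k hk hk0
    have : 2 * k ≤ n := by have := mem_range.mp hk; omega
    rw [coeff_C_mul_X_pow, if_neg (by omega)]
  · simp

theorem degree_hermitePoly (n : ℕ) : (hermitePoly n).degree = n :=
  degree_eq_of_le_of_coeff_ne_zero
    (degree_le_natDegree.trans (by exact_mod_cast natDegree_hermitePoly_le n))
    (by rw [coeff_hermitePoly_self]; positivity)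

theorem leadingCoeff_hermitePoly (n : ℕ) : (hermitePoly n).leadingCoeff = 2 ^ n := by
  rw [leadingCoeff, natDegree_eq_of_degree_eq_some (degree_hermitePoly n), coeff_hermitePoly_self]

theorem span_range_hermitePoly : Submodule.span ℝ (Set.range hermitePoly) = ⊤ :=
  Polynomial.Sequence.span (S := ⟨hermitePoly, degree_hermitePoly⟩) fun n => by
    change IsUnit (hermitePoly n).leadingCoeff
    rw [leadingCoeff_hermitePoly]
    exact isUnit_iff_ne_zero.mpr (by positivity)

theorem hermitePoly_comp_neg_X (n : ℕ) :
    (hermitePoly n).comp (-X) = (-1 : ℝ) ^ n • hermitePoly n := by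
  rw [hermitePoly, Polynomial.sum_comp, smul_sum]
  refine sum_congr rfl fun k hk => ?_
  have h2k : 2 * k ≤ n := by have := mem_range.mp hk; omega
  obtain ⟨m, rfl⟩ := Nat.exists_eq_add_of_le h2k
  rw [mul_comp, C_comp, X_pow_comp, neg_pow (X : ℝ[X]), smul_eq_C_mul, Nat.add_sub_cancel_left,
    pow_add, pow_mul, neg_one_sq, one_pow, one_mul]
  simp only [map_pow, map_neg, map_one]
  ring

theorem apply_eq_apply_comp_neg_X_of_hermitePoly (T S : ℝ[X] →ₗ[ℝ] ℝ[X])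
    (h : ∀ n, T (hermitePoly n) = (-1 : ℝ) ^ n • S (hermitePoly n)) (p : ℝ[X]) :
    T p = S (p.comp (-X)) := by
  have hTS : T = S ∘ₗ (aeval (-X : ℝ[X])).toLinearMap := by
    refine LinearMap.ext_on span_range_hermitePoly ?_
    rintro _ ⟨n, rfl⟩
    rw [h, LinearMap.comp_apply, AlgHom.toLinearMap_apply, ← comp_eq_aeval,
      hermitePoly_comp_neg_X, map_smul]
  rw [hTS, LinearMap.comp_apply, AlgHom.toLinearMap_apply, comp_eq_aeval]

/-- relation between the differential coefficients of the Hermite diagonal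
operators with eigenvalues γₙ and (-1)ⁿ γₙ. -/
theorem stmt_10 (γ : ℕ → ℝ)
    (T Tt : Polynomial ℝ →ₗ[ℝ] Polynomial ℝ)
    (hT : ∀ n, T (hermitePoly n) = γ n • hermitePoly n)
    (hTt : ∀ n, Tt (hermitePoly n) = ((-1 : ℝ) ^ n * γ n) • hermitePoly n)
    (Q Qt : ℕ → Polynomial ℝ)
    (hQ : ∀ p : Polynomial ℝ,
      T p = ∑ k ∈ Finset.range (p.natDegree + 1), Q k * (Polynomial.derivative^[k] p))
    (hQt : ∀ p : Polynomial ℝ,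
      Tt p = ∑ k ∈ Finset.range (p.natDegree + 1), Qt k * (Polynomial.derivative^[k] p)) :
    ∀ n : ℕ,
      Q n = Polynomial.C ((-2 : ℝ) ^ n) *
        ∑ k ∈ Finset.range (n + 1),
          Polynomial.C ((1 : ℝ) / (2 ^ k * (n - k).factorial)) * Qt k *
            Polynomial.X ^ (n - k) ∧
      Qt n = Polynomial.C ((-2 : ℝ) ^ n) *
        ∑ k ∈ Finset.range (n + 1),
          Polynomial.C ((1 : ℝ) / (2 ^ k * (n - k).factorial)) * Q k *
            Polynomial.X ^ (n - k) := by
  have hT_eq : ∀ p, T p = Tt (p.comp (-X)) :=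
    apply_eq_apply_comp_neg_X_of_hermitePoly T Tt fun n => by
      rw [hT, hTt, smul_smul, ← mul_assoc, ← mul_pow, neg_one_mul, neg_neg, one_pow, one_mul]
  have hTt_eq : ∀ p, Tt p = T (p.comp (-X)) :=
    apply_eq_apply_comp_neg_X_of_hermitePoly Tt T fun n => by rw [hT, hTt, smul_smul]
  have hQ_eq : Q = compNegXCoeff Qt :=
    eq_compNegXCoeff_of_diffOp_eq fun p => (hQ p).symm.trans ((hT_eq p).trans (hQt _))
  have hQt_eq : Qt = compNegXCoeff Q :=
    eq_compNegXCoeff_of_diffOp_eq fun p => (hQt p).symm.trans ((hTt_eq p).trans (hQ _))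
  exact fun n => ⟨congrFun hQ_eq n, congrFun hQt_eq n⟩
end
end
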